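/- arXiv:2505.21386 — 5 statements merged into one kernel-verified Lean document; each statement's English description precedes it below -/
import Mathlib

section
/- Consider the reduced system x^{t+1} = xᵗ + δ(P_X[xᵗ − γ F(xᵗ)] − xᵗ). Then there exist a continuous function V : ℝⁿ → ℝ and constants δ̄₂, γ̄ > 0 such that for any δ ∈ (0, δ̄₂) and γ ∈ (0, γ̄) there are c₁, c₂, c₃, c₄ > 0 with, for all x, x₁, x₂ ∈ X: (i) c₁‖x − x⋆‖² ≤ V(x) ≤ c₂‖x − x⋆‖²; (ii) V(x + δ(P_X[x − γF(x)] − x)) − V(x) ≤ −δ c₃‖x − x⋆‖²; (iii) |V(x₁) − V(x₂)| ≤ c₄‖x₁ − x₂‖‖x₁ − x⋆‖ + c₄‖x₁ − x₂‖‖x₂ − x⋆‖, where x⋆ is the unique Nash equilibrium. -/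
/-!
Take `V x = ‖x - x⋆‖²`. The projection onto a convex set is nonexpansive and, for `γ L² ≤ μ`,
the forward step `x ↦ x - γ F x` contracts squared distances by `1 - γμ`; since `x⋆` is a
fixed point of `x ↦ P_X[x - γ F x]`, this map pulls `x` towards `x⋆` by the same factor.
Convexity of `‖·‖²` turns this into the decrease `-δγμ ‖x - x⋆‖²` along the relaxed step, and
`‖a‖² - ‖b‖² = (‖a‖ - ‖b‖)(‖a‖ + ‖b‖)` gives the local Lipschitz bound with `c₄ = 1`.
-/

open RealInnerProductSpace

section InnerProductSpace

variable {E : Type*} [NormedAddCommGroup E] [InnerProductSpace ℝ E]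

theorem real_inner_sub_le_zero_of_forall_norm_sub_le {K : Set E} (hK : Convex ℝ K)
    {v p : E} (hp : p ∈ K) (hmin : ∀ y ∈ K, ‖v - p‖ ≤ ‖v - y‖) :
    ∀ y ∈ K, ⟪v - p, y - p⟫ ≤ 0 := by
  have : Nonempty K := ⟨⟨p, hp⟩⟩
  refine (norm_eq_iInf_iff_real_inner_le_zero hK hp).1 (le_antisymm ?_ ?_)
  · exact le_ciInf fun y => hmin y y.2
  · have hbdd : BddBelow (Set.range fun y : K => ‖v - y‖) :=
      ⟨0, Set.forall_mem_range.2 fun _ => norm_nonneg _⟩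
    exact ciInf_le hbdd ⟨p, hp⟩

theorem norm_proj_sub_proj_le {K : Set E} (hK : Convex ℝ K) {proj : E → E}
    (hproj : ∀ v, proj v ∈ K ∧ ∀ y ∈ K, ‖v - proj v‖ ≤ ‖v - y‖) (u v : E) :
    ‖proj u - proj v‖ ≤ ‖u - v‖ := by
  have hu :=
    real_inner_sub_le_zero_of_forall_norm_sub_le hK (hproj u).1 (hproj u).2 _ (hproj v).1
  have hv :=
    real_inner_sub_le_zero_of_forall_norm_sub_le hK (hproj v).1 (hproj v).2 _ (hproj u).1
  have key : ‖proj u - proj v‖ ^ 2 ≤ ⟪u - v, proj u - proj v⟫ := by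
    have hflip : ⟪u - proj u, proj u - proj v⟫ = -⟪u - proj u, proj v - proj u⟫ := by
      rw [← inner_neg_right, neg_sub]
    have hsplit : ⟪u - v, proj u - proj v⟫ = ⟪u - proj u, proj u - proj v⟫
        - ⟪v - proj v, proj u - proj v⟫ + ‖proj u - proj v‖ ^ 2 := by
      rw [← real_inner_self_eq_norm_sq, ← inner_sub_left, ← inner_add_left]
      congr 1; abel
    linarith
  have hcs := real_inner_le_norm (u - v) (proj u - proj v)
  nlinarith [norm_nonneg (proj u - proj v), norm_nonneg (u - v)]

/-- Expanding the square gives the factor `1 - 2γμ + γ²L²`, which is at most `1 - γμ`. -/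
theorem norm_forwardStep_sub_sq_le {F : E → E} {μ L γ : ℝ}
    (hmono : ∀ x y, μ * ‖x - y‖ ^ 2 ≤ ⟪F x - F y, x - y⟫)
    (hFlip : ∀ x y, ‖F x - F y‖ ≤ L * ‖x - y‖) (hγ : 0 ≤ γ) (hγL : γ * L ^ 2 ≤ μ) (x y : E) :
    ‖(x - γ • F x) - (y - γ • F y)‖ ^ 2 ≤ (1 - γ * μ) * ‖x - y‖ ^ 2 := by
  have expand : ‖(x - γ • F x) - (y - γ • F y)‖ ^ 2 =
      ‖x - y‖ ^ 2 - 2 * γ * ⟪F x - F y, x - y⟫ + γ ^ 2 * ‖F x - F y‖ ^ 2 := by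
    rw [show (x - γ • F x) - (y - γ • F y) = (x - y) - γ • (F x - F y) by module,
      norm_sub_sq_real, norm_smul, real_inner_smul_right, real_inner_comm, Real.norm_eq_abs,
      abs_of_nonneg hγ]
    ring
  have hlip : ‖F x - F y‖ ^ 2 ≤ L ^ 2 * ‖x - y‖ ^ 2 := by
    rw [← mul_pow]; exact pow_le_pow_left₀ (norm_nonneg _) (hFlip x y) 2
  have hmono' := mul_le_mul_of_nonneg_left (hmono x y) (by positivity : 0 ≤ 2 * γ)
  have hlip' := mul_le_mul_of_nonneg_left hlip (sq_nonneg γ)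
  have hγL' := mul_le_mul_of_nonneg_left (mul_le_mul_of_nonneg_left hγL hγ) (sq_nonneg ‖x - y‖)
  rw [expand]
  nlinarith

theorem norm_sq_convexCombination_le (a b : E) {δ : ℝ} (hδ₀ : 0 ≤ δ) (hδ₁ : δ ≤ 1) :
    ‖(1 - δ) • a + δ • b‖ ^ 2 ≤ (1 - δ) * ‖a‖ ^ 2 + δ * ‖b‖ ^ 2 :=
  (convexOn_univ_norm.pow (fun _ _ => norm_nonneg _) 2).2 (Set.mem_univ a) (Set.mem_univ b)
    (by linarith) hδ₀ (by ring)

theorem norm_relaxedStep_sub_sq_le {x T xstar : E} {δ c : ℝ} (hδ₀ : 0 ≤ δ) (hδ₁ : δ ≤ 1)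
    (hT : ‖T - xstar‖ ^ 2 ≤ (1 - c) * ‖x - xstar‖ ^ 2) :
    ‖x + δ • (T - x) - xstar‖ ^ 2 - ‖x - xstar‖ ^ 2 ≤ -(δ * c) * ‖x - xstar‖ ^ 2 := by
  have hconv := norm_sq_convexCombination_le (x - xstar) (T - xstar) hδ₀ hδ₁
  rw [show (1 - δ) • (x - xstar) + δ • (T - xstar) = x + δ • (T - x) - xstar by module] at hconv
  nlinarith [mul_le_mul_of_nonneg_left hT hδ₀]

end InnerProductSpace

theorem abs_norm_sq_sub_norm_sq_le {E : Type*} [SeminormedAddCommGroup E] (a b : E) :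
    |‖a‖ ^ 2 - ‖b‖ ^ 2| ≤ ‖a - b‖ * (‖a‖ + ‖b‖) := by
  rw [sq_sub_sq, mul_comm, abs_mul, abs_of_nonneg (by positivity : 0 ≤ ‖a‖ + ‖b‖)]
  exact mul_le_mul_of_nonneg_right (abs_norm_sub_norm_le a b) (by positivity)

theorem reduced_system_lyapunov_general
    (nn : ℕ)
    (X : Set (EuclideanSpace ℝ (Fin nn)))
    (hXcv : Convex ℝ X)
    (F : EuclideanSpace ℝ (Fin nn) → EuclideanSpace ℝ (Fin nn))
    (μ L : ℝ) (hμ : 0 < μ) (hL : 0 < L)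
    -- `F` is `μ`-strongly monotone and `L`-Lipschitz continuous
    (hmono : ∀ x y : EuclideanSpace ℝ (Fin nn), μ * ‖x - y‖ ^ 2 ≤ ⟪F x - F y, x - y⟫)
    (hFlip : ∀ x y : EuclideanSpace ℝ (Fin nn), ‖F x - F y‖ ≤ L * ‖x - y‖)
    -- `proj` is the Euclidean projection onto `X`
    (proj : EuclideanSpace ℝ (Fin nn) → EuclideanSpace ℝ (Fin nn))
    (hproj : ∀ v, proj v ∈ X ∧ ∀ y ∈ X, ‖v - proj v‖ ≤ ‖v - y‖)
    -- the unique Nash equilibrium and its fixed-point characterization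
    (xstar : EuclideanSpace ℝ (Fin nn))
    (hfix : ∀ γ : ℝ, 0 < γ → proj (xstar - γ • F xstar) = xstar) :
    ∃ V : EuclideanSpace ℝ (Fin nn) → ℝ, Continuous V ∧
      ∃ δbar2 γbar : ℝ, 0 < δbar2 ∧ 0 < γbar ∧
        ∀ δ γ : ℝ, 0 < δ → δ < δbar2 → 0 < γ → γ < γbar →
          ∃ c1 c2 c3 c4 : ℝ, 0 < c1 ∧ 0 < c2 ∧ 0 < c3 ∧ 0 < c4 ∧
            (∀ x ∈ X, c1 * ‖x - xstar‖ ^ 2 ≤ V x ∧ V x ≤ c2 * ‖x - xstar‖ ^ 2) ∧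
            (∀ x ∈ X, V (x + δ • (proj (x - γ • F x) - x)) - V x ≤
              -(δ * c3) * ‖x - xstar‖ ^ 2) ∧
            (∀ x1 ∈ X, ∀ x2 ∈ X, |V x1 - V x2| ≤
              c4 * ‖x1 - x2‖ * ‖x1 - xstar‖ + c4 * ‖x1 - x2‖ * ‖x2 - xstar‖) := by
  refine ⟨fun x => ‖x - xstar‖ ^ 2, by fun_prop, 1, μ / L ^ 2, one_pos, by positivity, ?_⟩
  intro δ γ hδ hδ1 hγ hγbar
  have hγL : γ * L ^ 2 ≤ μ := ((lt_div_iff₀ (by positivity)).1 hγbar).le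
  refine ⟨1, 1, γ * μ, 1, one_pos, one_pos, by positivity, one_pos,
    fun x _ => ⟨by simp, by simp⟩, fun x _ => ?_, fun x1 _ x2 _ => ?_⟩
  · have hstep : ‖proj (x - γ • F x) - xstar‖ ^ 2 ≤ (1 - γ * μ) * ‖x - xstar‖ ^ 2 := by
      calc ‖proj (x - γ • F x) - xstar‖ ^ 2
          = ‖proj (x - γ • F x) - proj (xstar - γ • F xstar)‖ ^ 2 := by rw [hfix γ hγ]
        _ ≤ ‖(x - γ • F x) - (xstar - γ • F xstar)‖ ^ 2 := by
          gcongr; exact norm_proj_sub_proj_le hXcv hproj _ _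
        _ ≤ (1 - γ * μ) * ‖x - xstar‖ ^ 2 :=
          norm_forwardStep_sub_sq_le hmono hFlip hγ.le hγL x xstar
    exact norm_relaxedStep_sub_sq_le hδ.le hδ1.le hstep
  · have h := abs_norm_sq_sub_norm_sq_le (x1 - xstar) (x2 - xstar)
    rw [sub_sub_sub_cancel_right] at h
    linarith

/-- Lyapunov function for the reduced system
`x^{t+1} = xᵗ + δ(P_X[xᵗ − γF(xᵗ)] − xᵗ)`, where `x⋆` is the unique Nash equilibrium
(characterized by `x⋆ = P_X[x⋆ − γF(x⋆)]` for every `γ > 0`). -/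
theorem reduced_system_lyapunov
    (nn : ℕ)
    (X : Set (EuclideanSpace ℝ (Fin nn)))
    (hXne : X.Nonempty) (hXcl : IsClosed X) (hXcv : Convex ℝ X)
    (F : EuclideanSpace ℝ (Fin nn) → EuclideanSpace ℝ (Fin nn))
    (μ L : ℝ) (hμ : 0 < μ) (hL : 0 < L)
    -- `F` is `μ`-strongly monotone and `L`-Lipschitz continuous
    (hmono : ∀ x y : EuclideanSpace ℝ (Fin nn), μ * ‖x - y‖ ^ 2 ≤ ⟪F x - F y, x - y⟫)
    (hFlip : ∀ x y : EuclideanSpace ℝ (Fin nn), ‖F x - F y‖ ≤ L * ‖x - y‖)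
    -- `proj` is the Euclidean projection onto `X`
    (proj : EuclideanSpace ℝ (Fin nn) → EuclideanSpace ℝ (Fin nn))
    (hproj : ∀ v, proj v ∈ X ∧ ∀ y ∈ X, ‖v - proj v‖ ≤ ‖v - y‖)
    -- the unique Nash equilibrium and its fixed-point characterization
    (xstar : EuclideanSpace ℝ (Fin nn))
    (hxstarX : xstar ∈ X)
    (hfix : ∀ γ : ℝ, 0 < γ → proj (xstar - γ • F xstar) = xstar) :
    ∃ V : EuclideanSpace ℝ (Fin nn) → ℝ, Continuous V ∧
      ∃ δbar2 γbar : ℝ, 0 < δbar2 ∧ 0 < γbar ∧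
        ∀ δ γ : ℝ, 0 < δ → δ < δbar2 → 0 < γ → γ < γbar →
          ∃ c1 c2 c3 c4 : ℝ, 0 < c1 ∧ 0 < c2 ∧ 0 < c3 ∧ 0 < c4 ∧
            (∀ x ∈ X, c1 * ‖x - xstar‖ ^ 2 ≤ V x ∧ V x ≤ c2 * ‖x - xstar‖ ^ 2) ∧
            (∀ x ∈ X, V (x + δ • (proj (x - γ • F x) - x)) - V x ≤
              -(δ * c3) * ‖x - xstar‖ ^ 2) ∧
            (∀ x1 ∈ X, ∀ x2 ∈ X, |V x1 - V x2| ≤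
              c4 * ‖x1 - x2‖ * ‖x1 - xstar‖ + c4 * ‖x1 - x2‖ * ‖x2 - xstar‖) :=
  reduced_system_lyapunov_general nn X hXcv F μ L hμ hL hmono hFlip proj hproj xstar hfix
end

section
/- The matrix R_dᵀ W_d R_d ∈ ℝ^{(N−1)d×(N−1)d} is Schur stable, i.e., every eigenvalue of R_dᵀ W_d R_d has modulus strictly less than 1. -/
/-!
If `M v = μ v` for `M = Rᵀ W_d R`, then `R M = W_d R`, because `R Rᵀ` is the projection killing
the columns of `1_{N,d}` and `1_{N,d}ᵀ W_d = 1_{N,d}ᵀ`. So either `R v = 0` and `μ = 0`, or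
`x = R v` is an eigenvector of `W_d` whose `d` blocks of coordinates all sum to zero, and a nonzero
block `y` is an eigenvector of `W` for `μ` with `∑ y = 0`.

Suppose `‖μ‖ ≥ 1` and let `|y i|` be maximal. The eigen-equation writes `μ y i` as a convex
combination of the `y j`, all of modulus at most `‖μ y i‖`; by strict convexity of the disc,
`y j = μ y i` for every out-neighbour `j` of `i`. The self-loop at `i` forces `μ = 1`, strong
connectivity then makes `y` constant, and `∑ y = 0` forces `y = 0`.
-/

open Matrix Finset

noncomputable section

/-- The Kronecker product `W ⊗ I_d`. -/
def kronId {N : ℕ} (W : Matrix (Fin N) (Fin N) ℝ) (d : ℕ) :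
    Matrix (Fin N × Fin d) (Fin N × Fin d) ℝ :=
  Matrix.of fun p q => if p.2 = q.2 then W p.1 q.1 else 0

/-- The matrix `1_{N,d} = 1_N ⊗ I_d`. -/
def onesNd (N d : ℕ) : Matrix (Fin N × Fin d) (Fin d) ℝ :=
  Matrix.of fun p j => if p.2 = j then (1 : ℝ) else 0

theorem eq_of_sum_smul_eq_of_norm_le {E ι : Type*} [NormedAddCommGroup E] [InnerProductSpace ℝ E]
    {s : Finset ι} {c : ι → ℝ} {z : ι → E} {w : E}
    (hc : ∀ j ∈ s, 0 ≤ c j) (hsum : ∑ j ∈ s, c j = 1) (hz : ∀ j ∈ s, ‖z j‖ ≤ ‖w‖)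
    (hw : ∑ j ∈ s, c j • z j = w) {j : ι} (hj : j ∈ s) (hcj : 0 < c j) : z j = w := by
  -- `⟪w, z k⟫ ≤ ‖w‖²` with equality on average, hence wherever `c k > 0`; and
  -- `‖z k - w‖² ≤ 2 (‖w‖² - ⟪w, z k⟫)`.
  have hgap : ∀ k ∈ s, 0 ≤ c k * (‖w‖ ^ 2 - inner ℝ w (z k)) := fun k hk =>
    mul_nonneg (hc k hk) (by nlinarith [real_inner_le_norm w (z k), hz k hk, norm_nonneg w])
  have hgap_sum : ∑ k ∈ s, c k * (‖w‖ ^ 2 - inner ℝ w (z k)) = 0 := by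
    simp only [mul_sub, Finset.sum_sub_distrib, ← Finset.sum_mul, hsum, one_mul,
      ← real_inner_smul_right, ← inner_sum, hw, real_inner_self_eq_norm_sq, sub_self]
  have hgap_j : inner ℝ w (z j) = ‖w‖ ^ 2 := by
    have := (Finset.sum_eq_zero_iff_of_nonneg hgap).1 hgap_sum j hj
    linarith [(mul_eq_zero.1 this).resolve_left hcj.ne']
  have hdist : ‖z j - w‖ ^ 2 ≤ 0 := by
    rw [norm_sub_sq_real, real_inner_comm, hgap_j]
    nlinarith [hz j hj, norm_nonneg (z j)]
  rw [← sub_eq_zero, ← norm_eq_zero]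
  exact pow_eq_zero_iff two_ne_zero |>.1 (le_antisymm hdist (sq_nonneg _))

section Stochastic

variable {ι : Type*} [Fintype ι] {W : Matrix ι ι ℝ}

theorem Matrix.apply_eq_of_mulVec_eq_smul_of_norm_le (hWnonneg : ∀ i j, 0 ≤ W i j)
    (hWrow : ∀ i, ∑ j, W i j = 1) {μ : ℂ} {y : ι → ℂ}
    (hy : W.map (↑) *ᵥ y = μ • y) {i : ι} (hmax : ∀ j, ‖y j‖ ≤ ‖μ * y i‖) {j : ι}
    (hij : 0 < W i j) : y j = μ * y i := by
  refine eq_of_sum_smul_eq_of_norm_le (fun k _ => hWnonneg i k) (hWrow i)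
    (fun k _ => hmax k) ?_ (mem_univ j) hij
  simpa [mulVec, dotProduct, Complex.real_smul] using congrFun hy i

theorem Matrix.norm_lt_one_of_mulVec_eq_smul_of_sum_eq_zero (hWnonneg : ∀ i j, 0 ≤ W i j)
    (hWself : ∀ i, 0 < W i i) (hWconn : ∀ i j : ι, Relation.TransGen (fun a b => 0 < W b a) i j)
    (hWrow : ∀ i, ∑ j, W i j = 1) {μ : ℂ} {y : ι → ℂ} (hy0 : y ≠ 0)
    (hy : W.map (↑) *ᵥ y = μ • y) (hsum : ∑ i, y i = 0) : ‖μ‖ < 1 := by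
  by_contra! hμ
  obtain ⟨i', hi'⟩ := Function.ne_iff.1 hy0
  obtain ⟨i₀, -, hi₀⟩ := exists_max_image univ (‖y ·‖) ⟨i', mem_univ i'⟩
  have hyi₀ : y i₀ ≠ 0 := norm_pos_iff.1 ((norm_pos_iff.2 hi').trans_le (hi₀ i' (mem_univ i')))
  have hmax : ∀ j, ‖y j‖ ≤ ‖μ * y i₀‖ := fun j => (hi₀ j (mem_univ j)).trans <| by
    rw [norm_mul]; exact le_mul_of_one_le_left (norm_nonneg _) hμ
  have hspread : ∀ i, y i = y i₀ → ∀ j, 0 < W i j → y j = μ * y i₀ := fun i hi j hij => by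
    rw [← hi] at hmax ⊢
    exact apply_eq_of_mulVec_eq_smul_of_norm_le hWnonneg hWrow hy hmax hij
  have hμ1 : μ = 1 := (mul_eq_right₀ hyi₀).1 (hspread i₀ rfl i₀ (hWself i₀)).symm
  have hconst : ∀ j, y j = y i₀ := fun j => by
    induction hWconn j i₀ using Relation.TransGen.head_induction_on with
    | single hab => simpa [hμ1] using hspread i₀ rfl _ hab
    | head hab _ ih => simpa [hμ1] using hspread _ ih _ hab
  have hcard : (Fintype.card ι : ℂ) * y i₀ = 0 := by simpa [hconst] using hsum
  have : Nonempty ι := ⟨i₀⟩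
  exact mul_ne_zero (Nat.cast_ne_zero.2 Fintype.card_ne_zero) hyi₀ hcard

end Stochastic

theorem Matrix.mul_mul_transpose_mul_eq_mul {m n p S : Type*} [Fintype m] [Fintype n]
    [Fintype p] [DecidableEq m] [CommRing S] {R : Matrix m n S} {A : Matrix m m S}
    {O : Matrix m p S} {c : S} (hRRt : R * Rᵀ = 1 - c • (O * Oᵀ)) (hOA : Oᵀ * A = Oᵀ)
    (hOR : Oᵀ * R = 0) : R * (Rᵀ * A * R) = A * R := by
  calc R * (Rᵀ * A * R) = (R * Rᵀ) * A * R := by simp only [Matrix.mul_assoc]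
    _ = A * R - c • (O * (Oᵀ * A * R)) := by
      rw [hRRt, Matrix.sub_mul, Matrix.sub_mul, Matrix.one_mul, Matrix.smul_mul,
        Matrix.smul_mul]
      simp only [Matrix.mul_assoc]
    _ = A * R := by rw [hOA, hOR, Matrix.mul_zero, smul_zero, sub_zero]

theorem Matrix.eq_zero_or_mulVec_eq_smul_of_mul_eq {m n K : Type*} [Fintype m] [Fintype n]
    [Field K] {L : Matrix n m K} {A : Matrix m m K} {R : Matrix m n K}
    (hint : R * (L * A * R) = A * R) {μ : K} {v : n → K} (hv0 : v ≠ 0)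
    (hv : (L * A * R) *ᵥ v = μ • v) :
    μ = 0 ∨ (R *ᵥ v ≠ 0 ∧ A *ᵥ (R *ᵥ v) = μ • (R *ᵥ v)) := by
  by_cases hRv : R *ᵥ v = 0
  · left
    rw [← mulVec_mulVec, hRv, mulVec_zero, eq_comm, smul_eq_zero] at hv
    exact hv.resolve_right hv0
  · right
    refine ⟨hRv, ?_⟩
    rw [mulVec_mulVec, ← hint, ← mulVec_mulVec, hv, mulVec_smul]

theorem onesNd_transpose_mul_kronId {N : ℕ} {W : Matrix (Fin N) (Fin N) ℝ}
    (hWcol : ∀ j, ∑ i, W i j = 1) (d : ℕ) : (onesNd N d)ᵀ * kronId W d = (onesNd N d)ᵀ := by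
  ext k ⟨j, l⟩
  by_cases hl : l = k <;>
    simp [mul_apply, onesNd, kronId, Fintype.sum_prod_type, hl, hWcol]

theorem kronId_map_mulVec_apply {N : ℕ} (W : Matrix (Fin N) (Fin N) ℝ) (d : ℕ)
    (x : Fin N × Fin d → ℂ) (i : Fin N) (k : Fin d) :
    ((kronId W d).map (↑) *ᵥ x) (i, k) = (W.map (↑) *ᵥ fun j => x (j, k)) i := by
  simp [mulVec, dotProduct, kronId, Fintype.sum_prod_type, apply_ite ((↑) : ℝ → ℂ)]

theorem onesNd_transpose_map_mulVec_apply (N d : ℕ) (x : Fin N × Fin d → ℂ) (k : Fin d) :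
    ((onesNd N d)ᵀ.map (↑) *ᵥ x) k = ∑ i, x (i, k) := by
  simp [mulVec, dotProduct, onesNd, Fintype.sum_prod_type, apply_ite ((↑) : ℝ → ℂ)]

theorem norm_lt_one_of_kronId_mulVec_eq_smul {N d : ℕ} {W : Matrix (Fin N) (Fin N) ℝ}
    (hWnonneg : ∀ i j, 0 ≤ W i j) (hWself : ∀ i, 0 < W i i)
    (hWconn : ∀ i j : Fin N, Relation.TransGen (fun a b => 0 < W b a) i j)
    (hWrow : ∀ i, ∑ j, W i j = 1) {μ : ℂ} {x : Fin N × Fin d → ℂ} (hx0 : x ≠ 0)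
    (hx : (kronId W d).map (↑) *ᵥ x = μ • x) (hsum : (onesNd N d)ᵀ.map (↑) *ᵥ x = 0) :
    ‖μ‖ < 1 := by
  obtain ⟨⟨i, k⟩, hik⟩ := Function.ne_iff.1 hx0
  refine norm_lt_one_of_mulVec_eq_smul_of_sum_eq_zero hWnonneg hWself hWconn hWrow
    (y := fun j => x (j, k)) (fun h => hik (congrFun h i)) ?_ ?_
  · ext j
    simpa [kronId_map_mulVec_apply] using congrFun hx (j, k)
  · simpa [onesNd_transpose_map_mulVec_apply] using congrFun hsum k

theorem RtWdR_schur_stable_general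
    (N d : ℕ)
    (W : Matrix (Fin N) (Fin N) ℝ)
    (hWnonneg : ∀ i j, 0 ≤ W i j)
    (hWself : ∀ i, 0 < W i i)
    (hWconn : ∀ i j : Fin N, Relation.TransGen (fun a b => 0 < W b a) i j)
    (hWrow : ∀ i, ∑ j, W i j = 1)
    (hWcol : ∀ j, ∑ i, W i j = 1)
    (R : Matrix (Fin N × Fin d) (Fin ((N - 1) * d)) ℝ)
    (hRRt : R * Rᵀ = 1 - (N : ℝ)⁻¹ • (onesNd N d * (onesNd N d)ᵀ))
    (hRones : Rᵀ * onesNd N d = 0) :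
    ∀ μ : ℂ, μ ∈ spectrum ℂ ((Rᵀ * kronId W d * R).map (fun a : ℝ => (a : ℂ))) →
      ‖μ‖ < 1 := by
  intro μ hμ
  have hOR : (onesNd N d)ᵀ * R = 0 := by simpa using congrArg transpose hRones
  have hint : R * (Rᵀ * kronId W d * R) = kronId W d * R :=
    mul_mul_transpose_mul_eq_mul hRRt (onesNd_transpose_mul_kronId hWcol d) hOR
  replace hint := congrArg (·.map Complex.ofRealHom) hint
  simp only [Matrix.map_mul, transpose_map] at hint
  rw [← spectrum_toLin'] at hμ
  obtain ⟨v, hv⟩ := (Module.End.hasEigenvalue_iff_mem_spectrum.2 hμ).exists_hasEigenvector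
  have hMv := hv.apply_eq_smul
  rw [toLin'_apply, show (fun a : ℝ => (a : ℂ)) = Complex.ofRealHom from rfl, Matrix.map_mul,
    Matrix.map_mul, transpose_map] at hMv
  rcases eq_zero_or_mulVec_eq_smul_of_mul_eq hint hv.2 hMv with rfl | ⟨hx0, hx⟩
  · simp
  · refine norm_lt_one_of_kronId_mulVec_eq_smul hWnonneg hWself hWconn hWrow hx0 hx ?_
    rw [mulVec_mulVec, show ((↑) : ℝ → ℂ) = Complex.ofRealHom from rfl, ← Matrix.map_mul, hOR,
      Matrix.map_zero _ (map_zero _), zero_mulVec]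

/-- the matrix `R_dᵀ W_d R_d` is Schur stable: all of its (complex)
eigenvalues have modulus strictly less than `1`. -/
theorem RtWdR_schur_stable
    (N d : ℕ) (hN : 2 ≤ N) (hd : 1 ≤ d)
    (W : Matrix (Fin N) (Fin N) ℝ)
    (hWnonneg : ∀ i j, 0 ≤ W i j)
    (hWself : ∀ i, 0 < W i i)
    (hWconn : ∀ i j : Fin N, Relation.TransGen (fun a b => 0 < W b a) i j)
    (hWrow : ∀ i, ∑ j, W i j = 1)
    (hWcol : ∀ j, ∑ i, W i j = 1)
    (R : Matrix (Fin N × Fin d) (Fin ((N - 1) * d)) ℝ)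
    (hRtR : Rᵀ * R = 1)
    (hRRt : R * Rᵀ = 1 - (N : ℝ)⁻¹ • (onesNd N d * (onesNd N d)ᵀ))
    (hRones : Rᵀ * onesNd N d = 0) :
    ∀ μ : ℂ, μ ∈ spectrum ℂ ((Rᵀ * kronId W d * R).map (fun a : ℝ => (a : ℂ))) →
      ‖μ‖ < 1 :=
  RtWdR_schur_stable_general N d W hWnonneg hWself hWconn hWrow hWcol R hRRt hRones
end
end

section
/- Fix x ∈ ℝⁿ and consider the dynamics z^{t+1} = W_d zᵗ + (W_d − I_{Nd})φ(x) with initialization satisfying 1_{N,d}ᵀ z⁰ = 0. Then zᵗ converges exponentially to the point z⋆ whose i-th block is z⋆_i = σ(x) − φ_i(x): there exist C > 0 and ρ ∈ (0,1) such that ‖zᵗ − z⋆‖ ≤ C ρᵗ ‖z⁰ − z⋆‖ for all t ≥ 0. -/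
/-!
The error `eₜ = zₜ - z⋆` satisfies `eₜ₊₁ = (W ⊗ I) eₜ`, because `z⋆ + φ(x)` is constant across
blocks and hence fixed by the row-stochastic `W ⊗ I`. Moreover `1_{N,d}ᵀ eₜ = 0`: at `t = 0` by
the choice of `z⁰` and of `z⋆`, and afterwards because `W` is column stochastic. A doubly
stochastic matrix does not increase the Euclidean norm (Schur test). Strong connectivity with
self-loops makes some power `W ^ m` entrywise at least `ε > 0`; on zero-sum vectors `W ^ m` acts as
the nonnegative matrix `W ^ m - ε 𝟙𝟙ᵀ`, whose row and column sums are `1 - N ε`, so every `m`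
steps the norm of the error contracts by the factor `1 - N ε < 1`.
-/

open Matrix Finset

noncomputable section

/-- Euclidean norm of a vector indexed by a finite type. -/
def enorm {ι : Type*} [Fintype ι] (v : ι → ℝ) : ℝ :=
  Real.sqrt (∑ i, v i ^ 2)

open scoped Kronecker

-- Schur test: weighted Cauchy–Schwarz in each row, then the column sums.
theorem enorm_mulVec_le_of_nonneg {ι : Type*} [Fintype ι] {B : Matrix ι ι ℝ} {s : ℝ}
    (hB : ∀ i j, 0 ≤ B i j) (hrow : ∀ i, ∑ j, B i j ≤ s) (hcol : ∀ j, ∑ i, B i j ≤ s)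
    (u : ι → ℝ) : _root_.enorm (B *ᵥ u) ≤ s * _root_.enorm u := by
  rcases isEmpty_or_nonempty ι with _ | ⟨⟨i₀⟩⟩
  · simp [_root_.enorm]
  have hs : 0 ≤ s := (sum_nonneg fun j _ => hB i₀ j).trans (hrow i₀)
  have hrow_sq : ∀ i, (B *ᵥ u) i ^ 2 ≤ s * ∑ j, B i j * u j ^ 2 := fun i =>
    calc (B *ᵥ u) i ^ 2 ≤ (∑ j, B i j) * ∑ j, B i j * u j ^ 2 :=
          sum_sq_le_sum_mul_sum_of_sq_le_mul _ (fun j _ => hB i j)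
            (fun j _ => mul_nonneg (hB i j) (sq_nonneg _)) (fun j _ => le_of_eq (by ring))
      _ ≤ s * ∑ j, B i j * u j ^ 2 :=
          mul_le_mul_of_nonneg_right (hrow i)
            (sum_nonneg fun j _ => mul_nonneg (hB i j) (sq_nonneg _))
  have hsum_sq : ∑ i, (B *ᵥ u) i ^ 2 ≤ s ^ 2 * ∑ j, u j ^ 2 :=
    calc ∑ i, (B *ᵥ u) i ^ 2 ≤ ∑ i, s * ∑ j, B i j * u j ^ 2 :=
          sum_le_sum fun i _ => hrow_sq i
      _ = s * ∑ j, (∑ i, B i j) * u j ^ 2 := by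
          rw [← mul_sum, sum_comm]; simp only [sum_mul]
      _ ≤ s * ∑ j, s * u j ^ 2 := by gcongr with j; exact hcol j
      _ = s ^ 2 * ∑ j, u j ^ 2 := by rw [← mul_sum, ← mul_assoc, sq]
  calc _root_.enorm (B *ᵥ u) ≤ Real.sqrt (s ^ 2 * ∑ j, u j ^ 2) := Real.sqrt_le_sqrt hsum_sq
    _ = s * _root_.enorm u := by
      rw [Real.sqrt_mul (sq_nonneg s), Real.sqrt_sq hs, _root_.enorm]


section kronId

variable {N d : ℕ}

lemma kronId_eq_kronecker (A : Matrix (Fin N) (Fin N) ℝ) : kronId A d = A ⊗ₖ 1 := by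
  ext ⟨i, k⟩ ⟨j, l⟩
  simp [kronId, one_apply]

lemma kronId_pow (A : Matrix (Fin N) (Fin N) ℝ) (t : ℕ) :
    kronId A d ^ t = kronId (A ^ t) d := by
  induction t with
  | zero => rw [pow_zero, pow_zero, kronId_eq_kronecker, one_kronecker_one]
  | succ t ih => rw [pow_succ, ih, pow_succ, kronId_eq_kronecker, kronId_eq_kronecker,
      kronId_eq_kronecker, ← mul_kronecker_mul, one_mul]

lemma kronId_mulVec_apply (A : Matrix (Fin N) (Fin N) ℝ) (v : Fin N × Fin d → ℝ)
    (i : Fin N) (k : Fin d) : (kronId A d *ᵥ v) (i, k) = ∑ j, A i j * v (j, k) := by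
  simp only [mulVec, dotProduct, kronId, of_apply, Fintype.sum_prod_type, ite_mul, zero_mul,
    sum_ite_eq, mem_univ, if_true]

lemma sum_kronId_mulVec_of_mem_colStochastic {A : Matrix (Fin N) (Fin N) ℝ}
    (hA : A ∈ colStochastic ℝ (Fin N)) (v : Fin N × Fin d → ℝ) (k : Fin d) :
    ∑ i, (kronId A d *ᵥ v) (i, k) = ∑ i, v (i, k) := by
  simp only [kronId_mulVec_apply]
  exact sum_mulVec_of_mem_colStochastic (x := fun j => v (j, k)) hA

lemma kronId_mulVec_of_mem_rowStochastic {A : Matrix (Fin N) (Fin N) ℝ}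
    (hA : A ∈ rowStochastic ℝ (Fin N)) (c : Fin d → ℝ) :
    kronId A d *ᵥ (fun p => c p.2) = fun p => c p.2 := by
  ext ⟨i, k⟩
  rw [kronId_mulVec_apply]
  simp only [← sum_mul, sum_row_of_mem_rowStochastic hA, one_mul]

theorem enorm_kronId_mulVec_le_of_nonneg {B : Matrix (Fin N) (Fin N) ℝ} {s : ℝ}
    (hB : ∀ i j, 0 ≤ B i j) (hrow : ∀ i, ∑ j, B i j ≤ s) (hcol : ∀ j, ∑ i, B i j ≤ s)
    (v : Fin N × Fin d → ℝ) : _root_.enorm (kronId B d *ᵥ v) ≤ s * _root_.enorm v := by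
  refine enorm_mulVec_le_of_nonneg (fun p q => ?_) (fun p => ?_) (fun q => ?_) v
  · simp only [kronId, of_apply]; split_ifs <;> simp [hB]
  · simpa [kronId, Fintype.sum_prod_type] using hrow p.1
  · simpa [kronId, Fintype.sum_prod_type, sum_comm (γ := Fin N)] using hcol q.1

lemma enorm_kronId_mulVec_le_of_mem_doublyStochastic {A : Matrix (Fin N) (Fin N) ℝ}
    (hA : A ∈ doublyStochastic ℝ (Fin N)) (v : Fin N × Fin d → ℝ) :
    _root_.enorm (kronId A d *ᵥ v) ≤ _root_.enorm v := by
  simpa using enorm_kronId_mulVec_le_of_nonneg (fun i j => nonneg_of_mem_doublyStochastic hA)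
    (fun i => (sum_row_of_mem_doublyStochastic hA i).le)
    (fun j => (sum_col_of_mem_doublyStochastic hA j).le) v

/-- When `1_{N,d}ᵀ v = 0`, `A ⊗ I` acts on `v` as `(A - ε 𝟙𝟙ᵀ) ⊗ I`, a nonnegative matrix with
row and column sums `1 - N ε`. -/
theorem enorm_kronId_mulVec_le_of_le_apply {A : Matrix (Fin N) (Fin N) ℝ}
    (hA : A ∈ doublyStochastic ℝ (Fin N)) {ε : ℝ} (hε : ∀ i j, ε ≤ A i j)
    {v : Fin N × Fin d → ℝ} (hv : ∀ k, ∑ i, v (i, k) = 0) :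
    _root_.enorm (kronId A d *ᵥ v) ≤ (1 - N * ε) * _root_.enorm v := by
  set B : Matrix (Fin N) (Fin N) ℝ := of fun i j => A i j - ε
  have hAB : kronId A d *ᵥ v = kronId B d *ᵥ v := by
    ext ⟨i, k⟩
    simp only [kronId_mulVec_apply, B, of_apply, sub_mul, sum_sub_distrib, ← mul_sum, hv,
      mul_zero, sub_zero]
  rw [hAB]
  refine enorm_kronId_mulVec_le_of_nonneg (fun i j => sub_nonneg.2 (hε i j)) (fun i => ?_)
    (fun j => ?_) v
  · simp [sum_sub_distrib, sum_row_of_mem_doublyStochastic hA]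
  · simp [sum_sub_distrib, sum_col_of_mem_doublyStochastic hA]

theorem exists_enorm_kronId_mulVec_le_of_pos (hN : 0 < N) {A : Matrix (Fin N) (Fin N) ℝ}
    (hA : A ∈ doublyStochastic ℝ (Fin N)) (hpos : ∀ i j, 0 < A i j) :
    ∃ r < 1, ∀ v : Fin N × Fin d → ℝ, (∀ k, ∑ i, v (i, k) = 0) →
      _root_.enorm (kronId A d *ᵥ v) ≤ r * _root_.enorm v := by
  have hne : (univ : Finset (Fin N × Fin N)).Nonempty := ⟨(⟨0, hN⟩, ⟨0, hN⟩), mem_univ _⟩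
  set ε := univ.inf' hne fun p => A p.1 p.2
  have hε : 0 < ε := (lt_inf'_iff hne).2 fun p _ => hpos p.1 p.2
  refine ⟨1 - N * ε, by have : (0 : ℝ) < N := Nat.cast_pos.2 hN; nlinarith, fun v hv => ?_⟩
  exact enorm_kronId_mulVec_le_of_le_apply hA (fun i j => inf'_le _ (mem_univ (i, j))) hv

end kronId

section Primitive

variable {ι : Type*} [Fintype ι] [DecidableEq ι] {W : Matrix ι ι ℝ}

lemma exists_pow_apply_pos_of_transGen (hW : ∀ i j, 0 ≤ W i j) {i j : ι}
    (h : Relation.TransGen (fun a b => 0 < W b a) i j) : ∃ t, 0 < (W ^ t) j i := by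
  induction h with
  | single hb => exact ⟨1, by rwa [pow_one]⟩
  | @tail b c _ hbc ih =>
    obtain ⟨t, ht⟩ := ih
    refine ⟨t + 1, ?_⟩
    rw [pow_succ', mul_apply]
    exact sum_pos' (fun k _ => mul_nonneg (hW c k) (pow_apply_nonneg hW t k i))
      ⟨b, mem_univ b, mul_pos hbc ht⟩

lemma pow_apply_pos_of_le (hW : ∀ i j, 0 ≤ W i j) (hself : ∀ i, 0 < W i i) {i j : ι}
    {a b : ℕ} (hab : a ≤ b) (h : 0 < (W ^ a) i j) : 0 < (W ^ b) i j := by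
  induction b, hab using Nat.le_induction with
  | base => exact h
  | succ b _ ih =>
    rw [pow_succ', mul_apply]
    exact sum_pos' (fun k _ => mul_nonneg (hW i k) (pow_apply_nonneg hW b k j))
      ⟨i, mem_univ i, mul_pos (hself i) ih⟩

/-- Self-loops make positivity of `(W ^ t) i j` persist as `t` grows, so a common exponent
beyond all path lengths works for every pair. -/
theorem isPrimitive_of_transGen (hW : ∀ i j, 0 ≤ W i j) (hself : ∀ i, 0 < W i i)
    (hconn : ∀ i j, Relation.TransGen (fun a b => 0 < W b a) i j) : W.IsPrimitive := by
  choose t ht using fun p : ι × ι => exists_pow_apply_pos_of_transGen hW (hconn p.2 p.1)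
  refine ⟨hW, univ.sup t + 1, Nat.succ_pos _, fun i j => ?_⟩
  exact pow_apply_pos_of_le hW hself ((le_sup (mem_univ (i, j))).trans (Nat.le_succ _)) (ht (i, j))

end Primitive

/-- The rate is `ρ = (max r (1/2)) ^ (1/m)`; the constant `C` absorbs the remainder of `t`
modulo `m`. -/
theorem exists_geometric_bound {a : ℕ → ℝ} (ha : ∀ t, 0 ≤ a t) (hanti : Antitone a) {m : ℕ}
    (hm : 0 < m) {r : ℝ} (hr : r < 1) (hstep : ∀ t, a (t + m) ≤ r * a t) :
    ∃ C : ℝ, 0 < C ∧ ∃ ρ : ℝ, 0 < ρ ∧ ρ < 1 ∧ ∀ t : ℕ, a t ≤ C * ρ ^ t * a 0 := by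
  set r₁ := max r (1 / 2)
  have hr₁_pos : 0 < r₁ := lt_max_of_lt_right (by norm_num)
  have hr₁_lt : r₁ < 1 := max_lt hr (by norm_num)
  have hmul : ∀ q, a (m * q) ≤ r₁ ^ q * a 0 := by
    intro q
    induction q with
    | zero => simp
    | succ q ih =>
      calc a (m * (q + 1)) = a (m * q + m) := rfl
        _ ≤ r * a (m * q) := hstep _
        _ ≤ r₁ * a (m * q) := mul_le_mul_of_nonneg_right (le_max_left _ _) (ha _)
        _ ≤ r₁ * (r₁ ^ q * a 0) := mul_le_mul_of_nonneg_left ih hr₁_pos.le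
        _ = r₁ ^ (q + 1) * a 0 := by ring
  set ρ := r₁ ^ (m : ℝ)⁻¹
  have hρ_pos : 0 < ρ := Real.rpow_pos_of_pos hr₁_pos _
  have hρ_lt : ρ < 1 := Real.rpow_lt_one hr₁_pos.le hr₁_lt (by positivity)
  have hρ_pow : ρ ^ m = r₁ := by
    rw [← Real.rpow_natCast, ← Real.rpow_mul hr₁_pos.le, inv_mul_cancel₀ (by positivity),
      Real.rpow_one]
  refine ⟨r₁⁻¹, inv_pos.2 hr₁_pos, ρ, hρ_pos, hρ_lt, fun t => ?_⟩
  have ht : t ≤ m * (t / m + 1) := (Nat.lt_mul_div_succ t hm).le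
  calc a t ≤ a (m * (t / m)) := hanti (Nat.mul_div_le t m)
    _ ≤ r₁ ^ (t / m) * a 0 := hmul _
    _ = r₁⁻¹ * ρ ^ (m * (t / m + 1)) * a 0 := by
        rw [pow_mul, hρ_pow, pow_succ, mul_comm _ r₁, ← mul_assoc, inv_mul_cancel₀ hr₁_pos.ne',
          one_mul]
    _ ≤ r₁⁻¹ * ρ ^ t * a 0 := by
        have := pow_le_pow_of_le_one hρ_pos.le hρ_lt.le ht
        gcongr
        exact ha 0

lemma eq_pow_mulVec_of_forall_succ {ι : Type*} [Fintype ι] [DecidableEq ι] {M : Matrix ι ι ℝ}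
    {e : ℕ → ι → ℝ} (h : ∀ t, e (t + 1) = M *ᵥ e t) (t s : ℕ) : e (t + s) = (M ^ s) *ᵥ e t := by
  induction s with
  | zero => simp
  | succ s ih => rw [← add_assoc, h, ih, mulVec_mulVec, pow_succ']

/-- for fixed `x`, the dynamics `z^{t+1} = W_d zᵗ + (W_d − I)φ(x)` initialized
with `1_{N,d}ᵀ z⁰ = 0` converges exponentially to the point whose `i`-th block is
`σ(x) − φ_i(x_i)`. -/
theorem fast_dynamics_exponential_convergence
    (N d : ℕ) (hN : 1 ≤ N)
    (n : Fin N → ℕ)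
    (W : Matrix (Fin N) (Fin N) ℝ)
    (hWnonneg : ∀ i j, 0 ≤ W i j)
    (hWself : ∀ i, 0 < W i i)
    (hWconn : ∀ i j : Fin N, Relation.TransGen (fun a b => 0 < W b a) i j)
    (hWrow : ∀ i, ∑ j, W i j = 1)
    (hWcol : ∀ j, ∑ i, W i j = 1)
    (phi : ∀ i : Fin N, (Fin (n i) → ℝ) → (Fin d → ℝ))
    (x : ∀ i : Fin N, Fin (n i) → ℝ)
    (phiv : Fin N × Fin d → ℝ)
    (hphiv : ∀ p, phiv p = phi p.1 (x p.1) p.2)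
    (sigma : Fin d → ℝ)
    (hsigma : ∀ k, sigma k = (N : ℝ)⁻¹ * ∑ i, phi i (x i) k)
    (zstar : Fin N × Fin d → ℝ)
    (hzstar : ∀ p, zstar p = sigma p.2 - phi p.1 (x p.1) p.2)
    (z : ℕ → Fin N × Fin d → ℝ)
    (hz0 : ∀ k : Fin d, ∑ i, z 0 (i, k) = 0)
    (hz : ∀ t, z (t + 1) = (kronId W d) *ᵥ (z t) + (kronId W d - 1) *ᵥ phiv) :
    ∃ C : ℝ, 0 < C ∧ ∃ ρ : ℝ, 0 < ρ ∧ ρ < 1 ∧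
      ∀ t : ℕ, _root_.enorm (z t - zstar) ≤ C * ρ ^ t * _root_.enorm (z 0 - zstar) := by
  have hW : W ∈ doublyStochastic ℝ (Fin N) :=
    mem_doublyStochastic_iff_sum.2 ⟨hWnonneg, hWrow, hWcol⟩
  obtain ⟨hWrowSt, hWcolSt⟩ :=
    mem_doublyStochastic_iff_mem_rowStochastic_and_mem_colStochastic.1 hW
  set e : ℕ → Fin N × Fin d → ℝ := fun t => z t - zstar
  have he : ∀ t, e (t + 1) = kronId W d *ᵥ e t := by
    have hfix := kronId_mulVec_of_mem_rowStochastic (d := d) hWrowSt sigma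
    have hsplit : (fun p : Fin N × Fin d => sigma p.2) = zstar + phiv := by
      ext p; simp [hzstar, hphiv]
    rw [hsplit, mulVec_add] at hfix
    intro t
    simp only [e, hz, sub_mulVec, mulVec_sub, one_mulVec]
    linear_combination hfix
  have he_block : ∀ t k, ∑ i, e t (i, k) = 0 := by
    intro t k
    induction t with
    | zero =>
      have hN' : (N : ℝ) ≠ 0 := by positivity
      simp [e, hz0, hzstar, hsigma, sum_sub_distrib, hN']
    | succ t ih =>
      rw [he, sum_kronId_mulVec_of_mem_colStochastic hWcolSt, ih]
  obtain ⟨m, hm, hpos⟩ := (isPrimitive_of_transGen hWnonneg hWself hWconn).exists_pos_pow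
  obtain ⟨r, hr, hcontr⟩ := exists_enorm_kronId_mulVec_le_of_pos (d := d) hN (pow_mem hW m) hpos
  refine exists_geometric_bound (a := fun t => _root_.enorm (e t)) (fun t => Real.sqrt_nonneg _)
    (antitone_nat_of_succ_le fun t => ?_) hm hr fun t => ?_
  · rw [he]; exact enorm_kronId_mulVec_le_of_mem_doublyStochastic hW _
  · rw [eq_pow_mulVec_of_forall_succ he, kronId_pow]; exact hcontr _ (he_block t)
end
end

section
/- Let x⋆ be the unique Nash equilibrium of the game. Then for any γ > 0 and δ > 0, the pair (x⋆, h(x⋆)) with h(x⋆) = −R_dᵀφ(x⋆) is an equilibrium of the transformed TRADES dynamics: x⋆ = x⋆ + δ(P_X[x⋆ − γ F̃(x⋆, φ(x⋆) + R_d h(x⋆))] − x⋆) and h(x⋆) = R_dᵀ W_d R_d h(x⋆) + R_dᵀ(W_d − I_{Nd})φ(x⋆). -/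
open Matrix Finset

noncomputable section

/-!
The correction `R_d h(x⋆) = −R_d R_dᵀ φ(x⋆) = (1/N) 1_{N,d} 1_{N,d}ᵀ φ(x⋆) − φ(x⋆)` makes every
agent's aggregate estimate `φ(x⋆) + R_d h(x⋆)` equal to the true aggregate `σ(x⋆)`, so the
projected step is the Nash fixed point `x⋆ = P_X[x⋆ − γ F(x⋆)]`. For the `h`-equation, `W_d` fixes
`1_{N,d}` and `R_dᵀ 1_{N,d} = 0`, so `R_dᵀ W_d R_d R_dᵀ = R_dᵀ W_d` and the two `W_d` terms cancel.
-/

theorem kronId_mul_onesNd {N d : ℕ} {W : Matrix (Fin N) (Fin N) ℝ}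
    (hW : ∀ i, ∑ j, W i j = 1) : kronId W d * onesNd N d = onesNd N d := by
  ext ⟨i, k⟩ l
  simp only [kronId, onesNd, mul_apply, of_apply, Fintype.sum_prod_type, mul_ite, mul_one,
    mul_zero, Finset.sum_ite_eq', Finset.mem_univ, if_true]
  split_ifs with hkl
  · subst hkl; simp [hW]
  · simp

theorem onesNd_mul_transpose_mulVec_apply {N d : ℕ} (v : Fin N × Fin d → ℝ) (p : Fin N × Fin d) :
    ((onesNd N d * (onesNd N d)ᵀ) *ᵥ v) p = ∑ j, v (j, p.2) := by
  simp [mulVec, dotProduct, mul_apply, onesNd, Fintype.sum_prod_type]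

section
variable {m k o α : Type*} [Fintype m] [Fintype k] [Fintype o] [DecidableEq m] [CommRing α]

theorem add_mulVec_neg_transpose_mulVec {R : Matrix m k α} {P : Matrix m m α}
    (hR : R * Rᵀ = 1 - P) (v : m → α) : v + R *ᵥ -(Rᵀ *ᵥ v) = P *ᵥ v := by
  rw [mulVec_neg, mulVec_mulVec, hR, sub_mulVec, one_mulVec]
  abel

theorem transpose_mul_mul_mul_transpose {R : Matrix m k α} {K : Matrix m m α} {O : Matrix m o α}
    {c : α} (hR : R * Rᵀ = 1 - c • (O * Oᵀ)) (hRO : Rᵀ * O = 0) (hKO : K * O = O) :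
    Rᵀ * K * R * Rᵀ = Rᵀ * K := by
  have hO : Rᵀ * K * (O * Oᵀ) = 0 := by
    rw [Matrix.mul_assoc, ← Matrix.mul_assoc K, hKO, ← Matrix.mul_assoc, hRO, Matrix.zero_mul]
  rw [Matrix.mul_assoc _ R, hR, Matrix.mul_sub, Matrix.mul_one, Matrix.mul_smul, hO, smul_zero,
    sub_zero]

theorem mulVec_neg_transpose_mulVec_fixed {R : Matrix m k α} {K : Matrix m m α}
    {O : Matrix m o α} {c : α} (hR : R * Rᵀ = 1 - c • (O * Oᵀ)) (hRO : Rᵀ * O = 0)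
    (hKO : K * O = O) (v : m → α) :
    (Rᵀ * K * R) *ᵥ -(Rᵀ *ᵥ v) + (Rᵀ * (K - 1)) *ᵥ v = -(Rᵀ *ᵥ v) := by
  rw [mulVec_neg, mulVec_mulVec, transpose_mul_mul_mul_transpose hR hRO hKO, Matrix.mul_sub,
    Matrix.mul_one, sub_mulVec]
  abel
end

theorem NE_is_equilibrium_of_trades_general
    (N d : ℕ)
    (n : Fin N → ℕ)
    -- Euclidean projections onto the sets `X i`
    (proj : ∀ i : Fin N, (Fin (n i) → ℝ) → (Fin (n i) → ℝ))
    -- aggregation rules and aggregate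
    (phi : ∀ i : Fin N, (Fin (n i) → ℝ) → (Fin d → ℝ))
    -- local operators `F̃_i`
    (Ftil : ∀ i : Fin N, (Fin (n i) → ℝ) → (Fin d → ℝ) → (Fin (n i) → ℝ))
    -- network
    (W : Matrix (Fin N) (Fin N) ℝ)
    (hWrow : ∀ i, ∑ j, W i j = 1)
    (R : Matrix (Fin N × Fin d) (Fin ((N - 1) * d)) ℝ)
    (hRRt : R * Rᵀ = 1 - (N : ℝ)⁻¹ • (onesNd N d * (onesNd N d)ᵀ))
    (hRones : Rᵀ * onesNd N d = 0)
    -- the Nash equilibrium `x⋆` with its fixed-point characterization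
    -- `x⋆ = P_X[x⋆ − γ F(x⋆)]` (for every `γ > 0`), where by the chain rule the `i`-th
    -- block of `F(x⋆)` is `F̃_i(x⋆_i, σ(x⋆))`
    (xstar : ∀ i : Fin N, Fin (n i) → ℝ)
    (sigma : Fin d → ℝ)
    (hsigma : ∀ k, sigma k = (N : ℝ)⁻¹ * ∑ i, phi i (xstar i) k)
    (hfix : ∀ γ : ℝ, 0 < γ → ∀ i,
      proj i (xstar i - γ • Ftil i (xstar i) sigma) = xstar i)
    -- the stacked vector `φ(x⋆)` and `h(x⋆) = −R_dᵀ φ(x⋆)`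
    (phiv : Fin N × Fin d → ℝ)
    (hphiv : ∀ p, phiv p = phi p.1 (xstar p.1) p.2)
    (h : Fin ((N - 1) * d) → ℝ)
    (hh : h = -(Rᵀ *ᵥ phiv)) :
    ∀ γ δ : ℝ, 0 < γ → 0 < δ →
      (∀ i, xstar i = xstar i + δ •
        (proj i (xstar i - γ •
          Ftil i (xstar i) (fun k => phiv (i, k) + (R *ᵥ h) (i, k))) - xstar i)) ∧
      (Rᵀ * kronId W d * R) *ᵥ h + (Rᵀ * (kronId W d - 1)) *ᵥ phiv = h := by
  intro γ δ hγ _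
  subst hh
  have hestimate : ∀ i, (fun k => phiv (i, k) + (R *ᵥ -(Rᵀ *ᵥ phiv)) (i, k)) = sigma := by
    intro i
    ext k
    rw [← Pi.add_apply phiv, add_mulVec_neg_transpose_mulVec hRRt, smul_mulVec, Pi.smul_apply,
      onesNd_mul_transpose_mulVec_apply, hsigma, smul_eq_mul]
    simp only [hphiv]
  refine ⟨fun i => ?_, mulVec_neg_transpose_mulVec_fixed hRRt hRones (kronId_mul_onesNd hWrow) _⟩
  rw [hestimate, hfix γ hγ i, sub_self, smul_zero, add_zero]

/-- the pair `(x⋆, h(x⋆))`, with `x⋆` the (unique) Nash equilibrium and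
`h(x⋆) = −R_dᵀ φ(x⋆)`, is an equilibrium of the transformed TRADES dynamics, for any
`γ > 0` and `δ > 0`. -/
theorem NE_is_equilibrium_of_trades
    (N d : ℕ) (hN : 1 ≤ N)
    (n : Fin N → ℕ)
    -- local feasible sets: nonempty, closed, convex
    (X : ∀ i : Fin N, Set (Fin (n i) → ℝ))
    (hXne : ∀ i, (X i).Nonempty) (hXcl : ∀ i, IsClosed (X i)) (hXcv : ∀ i, Convex ℝ (X i))
    -- Euclidean projections onto the sets `X i`
    (proj : ∀ i : Fin N, (Fin (n i) → ℝ) → (Fin (n i) → ℝ))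
    (hproj : ∀ i v, proj i v ∈ X i ∧ ∀ y ∈ X i, _root_.enorm (v - proj i v) ≤ _root_.enorm (v - y))
    -- aggregation rules and aggregate
    (phi : ∀ i : Fin N, (Fin (n i) → ℝ) → (Fin d → ℝ))
    -- local operators `F̃_i`
    (Ftil : ∀ i : Fin N, (Fin (n i) → ℝ) → (Fin d → ℝ) → (Fin (n i) → ℝ))
    -- network
    (W : Matrix (Fin N) (Fin N) ℝ)
    (hWrow : ∀ i, ∑ j, W i j = 1)
    (hWcol : ∀ j, ∑ i, W i j = 1)
    (R : Matrix (Fin N × Fin d) (Fin ((N - 1) * d)) ℝ)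
    (hRtR : Rᵀ * R = 1)
    (hRRt : R * Rᵀ = 1 - (N : ℝ)⁻¹ • (onesNd N d * (onesNd N d)ᵀ))
    (hRones : Rᵀ * onesNd N d = 0)
    -- the Nash equilibrium `x⋆` with its fixed-point characterization
    -- `x⋆ = P_X[x⋆ − γ F(x⋆)]` (for every `γ > 0`), where by the chain rule the `i`-th
    -- block of `F(x⋆)` is `F̃_i(x⋆_i, σ(x⋆))`
    (xstar : ∀ i : Fin N, Fin (n i) → ℝ)
    (sigma : Fin d → ℝ)
    (hsigma : ∀ k, sigma k = (N : ℝ)⁻¹ * ∑ i, phi i (xstar i) k)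
    (hxstarX : ∀ i, xstar i ∈ X i)
    (hfix : ∀ γ : ℝ, 0 < γ → ∀ i,
      proj i (xstar i - γ • Ftil i (xstar i) sigma) = xstar i)
    -- the stacked vector `φ(x⋆)` and `h(x⋆) = −R_dᵀ φ(x⋆)`
    (phiv : Fin N × Fin d → ℝ)
    (hphiv : ∀ p, phiv p = phi p.1 (xstar p.1) p.2)
    (h : Fin ((N - 1) * d) → ℝ)
    (hh : h = -(Rᵀ *ᵥ phiv)) :
    ∀ γ δ : ℝ, 0 < γ → 0 < δ →
      (∀ i, xstar i = xstar i + δ •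
        (proj i (xstar i - γ •
          Ftil i (xstar i) (fun k => phiv (i, k) + (R *ᵥ h) (i, k))) - xstar i)) ∧
      (Rᵀ * kronId W d * R) *ᵥ h + (Rᵀ * (kronId W d - 1)) *ᵥ phiv = h :=
  NE_is_equilibrium_of_trades_general N d n proj phi Ftil W hWrow R hRRt hRones xstar sigma hsigma
    hfix phiv hphiv h hh
end
end

section
/- Consider the singularly perturbed interconnection χ^{t+1} = χᵗ + δ f(χᵗ, wᵗ), w^{t+1} = g(wᵗ, χᵗ), with χᵗ ∈ D ⊆ ℝⁿ (D closed and forward invariant for the χ-update), wᵗ ∈ ℝᵐ. Assume: (i) f and g are Lipschitz continuous in both arguments; (ii) there is a Lipschitz map h : D → ℝᵐ with h(χ) = g(h(χ), χ) for all χ ∈ D; (iii) there exist a continuous U : ℝᵐ → ℝ and b₁,…,b₄ > 0 such that for all χ ∈ D and ψ, ψ₁, ψ₂ ∈ ℝᵐ: b₁‖ψ‖² ≤ U(ψ) ≤ b₂‖ψ‖², U(g(ψ + h(χ), χ) − h(χ)) − U(ψ) ≤ −b₃‖ψ‖², and |U(ψ₁) − U(ψ₂)| ≤ b₄‖ψ₁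 − ψ₂‖(‖ψ₁‖ + ‖ψ₂‖); (iv) there exist χ⋆ ∈ D with f(χ⋆, h(χ⋆)) = 0, a continuous V : ℝⁿ → ℝ, δ̄₂ > 0 and c₁,…,c₄ > 0 such that for all δ ∈ (0, δ̄₂) and χ, χ₁, χ₂ ∈ D: c₁‖χ − χ⋆‖² ≤ V(χ) ≤ c₂‖χ − χ⋆‖², V(χ + δ f(χ, h(χ))) − V(χ) ≤ −δ c₃‖χ − χ⋆‖², and |V(χ₁) − V(χ₂)| ≤ c₄‖χ₁ − χ₂‖(‖χ₁ − χ⋆‖ + ‖χ₂ − χ⋆‖). Then there exist δ̄ ∈ (0, δ̄₂) and, for each δ ∈ (0, δ̄), constants a > 0 and λ > 0 such that for all initial conditions χ⁰ ∈ D, w⁰ ∈ ℝᵐ: ‖χᵗ − χ⋆‖² + ‖wᵗ − h(χᵗ)‖² ≤ a e^{−λ t}(‖χ⁰ − χ⋆‖² + ‖w⁰ − h(χ⁰)‖²) for all t ≥ 0; in particular (χ⋆, h(χ⋆)) is a globally exponentially stable equilibrium of the interconnection. -/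
/-!
The composite function `W (χ, w) = V χ + d * U (w - h χ)` is a Lyapunov function for the
interconnection. Driving the slow update by `w` instead of `h χ` perturbs the decrease
`-δ c₃ ‖χ - χ⋆‖²` of `V` by `O(δ ‖w - h χ‖ (‖χ - χ⋆‖ + ‖w - h χ‖))`, and the `O(δ)` drift of `h`
along the slow motion perturbs the decrease `-b₃ ‖w - h χ‖²` of `U` by
`O(δ (‖χ - χ⋆‖ + ‖w - h χ‖)²)`. A small weight `d` absorbs the second perturbation into the
decrease of `V`, then a small step `δ` absorbs the rest into the decrease of `U`, so `W` drops by
`δ μ (‖χ - χ⋆‖² + ‖w - h χ‖²)` per step. Since `W` is comparable to this quadratic form, it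
decays geometrically, hence exponentially.
-/

open Real

lemma le_exp_mul_of_le_one_sub_mul {W : ℕ → ℝ} {ε : ℝ} (hW : ∀ t, 0 ≤ W t)
    (hstep : ∀ t, W (t + 1) ≤ (1 - ε) * W t) (t : ℕ) :
    W t ≤ exp (-ε * t) * W 0 := by
  have hgeom := le_geom (exp_pos (-ε)).le t fun k _ =>
    (hstep k).trans (mul_le_mul_of_nonneg_right (one_sub_le_exp_neg ε) (hW k))
  rwa [← exp_nat_mul, mul_comm (t : ℝ)] at hgeom

lemma le_mul_exp_of_lyapunov {E W : ℕ → ℝ} {m M ε : ℝ} (hm : 0 < m) (hM : 0 < M)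
    (hε : 0 ≤ ε) (hE : ∀ t, 0 ≤ E t) (hlow : ∀ t, m * E t ≤ W t)
    (hup : ∀ t, W t ≤ M * E t) (hdec : ∀ t, W (t + 1) - W t ≤ -ε * E t) (t : ℕ) :
    E t ≤ M / m * exp (-(ε / M) * t) * E 0 := by
  have hW : ∀ t, 0 ≤ W t := fun t => (mul_nonneg hm.le (hE t)).trans (hlow t)
  have hstep : ∀ t, W (t + 1) ≤ (1 - ε / M) * W t := fun t => by
    have : ε / M * W t ≤ ε * E t := by
      calc ε / M * W t ≤ ε / M * (M * E t) := by gcongr; exact hup t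
        _ = ε * E t := by field_simp
    linarith [hdec t]
  have hdecay := le_exp_mul_of_le_one_sub_mul hW hstep t
  rw [← mul_le_mul_iff_of_pos_left hm]
  calc m * E t ≤ W t := hlow t
    _ ≤ exp (-(ε / M) * t) * (M * E 0) := hdecay.trans (by gcongr; exact hup 0)
    _ = m * (M / m * exp (-(ε / M) * t) * E 0) := by field_simp

lemma min_mul_add_le_add_mul {a b u v c b' d : ℝ} (hv : c * a ≤ v) (hu : b' * b ≤ u)
    (ha : 0 ≤ a) (hb : 0 ≤ b) (hd : 0 ≤ d) :
    min c (d * b') * (a + b) ≤ v + d * u := by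
  have := mul_le_mul_of_nonneg_left hu hd
  nlinarith [min_le_left c (d * b'), min_le_right c (d * b')]

lemma add_mul_le_max_mul_add {a b u v c b' d : ℝ} (hv : v ≤ c * a) (hu : u ≤ b' * b)
    (ha : 0 ≤ a) (hb : 0 ≤ b) (hd : 0 ≤ d) :
    v + d * u ≤ max c (d * b') * (a + b) := by
  have := mul_le_mul_of_nonneg_left hu hd
  nlinarith [le_max_left c (d * b'), le_max_right c (d * b')]

lemma sqrt_sq_add_sq_le_add {x y : ℝ} (hx : 0 ≤ x) (hy : 0 ≤ y) : √(x ^ 2 + y ^ 2) ≤ x + y :=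
  (sqrt_le_left (add_nonneg hx hy)).2 (by nlinarith)

lemma norm_le_sqrt_div_mul_norm {E F : Type*} [SeminormedAddCommGroup E]
    [SeminormedAddCommGroup F] {p : E} {q : F} {b₁ b₂ : ℝ} (hb₁ : 0 < b₁)
    (h : b₁ * ‖p‖ ^ 2 ≤ b₂ * ‖q‖ ^ 2) : ‖p‖ ≤ √(b₂ / b₁) * ‖q‖ := by
  rw [← sqrt_sq (norm_nonneg p), ← sqrt_sq (norm_nonneg q), ← sqrt_mul' _ (sq_nonneg _)]
  refine sqrt_le_sqrt ?_
  rw [div_mul_eq_mul_div, le_div_iff₀ hb₁]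
  linarith

lemma mul_le_div_four_mul_sq_add_sq_div {c : ℝ} (hc : 0 < c) (x y : ℝ) :
    x * y ≤ c / 4 * y ^ 2 + x ^ 2 / c := by
  have : c / 4 * y ^ 2 + x ^ 2 / c - x * y = (c / 2 * y - x) ^ 2 / c := by field_simp; ring
  rw [← sub_nonneg, this]
  positivity

lemma exists_weighted_sum_decrease {c₃ b₃ A B : ℝ} (hc₃ : 0 < c₃) (hb₃ : 0 < b₃) (hA : 0 ≤ A)
    (hB : 0 ≤ B) :
    ∃ d > 0, ∃ δ₀ > 0, δ₀ ≤ 1 ∧ ∃ μ > 0, ∀ δ, 0 ≤ δ → δ ≤ δ₀ →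
      ∀ e ψ v v' u u' : ℝ, 0 ≤ e → 0 ≤ ψ →
      v' - v ≤ -(δ * c₃) * e ^ 2 + δ * B * ψ * (e + ψ) →
      u' - u ≤ -b₃ * ψ ^ 2 + δ * A * (e + ψ) ^ 2 →
      v' + d * u' - (v + d * u) ≤ -(δ * μ) * (e ^ 2 + ψ ^ 2) := by
  set d := c₃ / (8 * (A + 1))
  have hd : 0 < d := by positivity
  have hdA : 2 * d * A ≤ c₃ / 4 := by
    have : 2 * d * A = c₃ / 4 * (A / (A + 1)) := by simp only [d]; field_simp; ring
    rw [this]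
    exact mul_le_of_le_one_right (by positivity) ((div_le_one (by positivity)).2 (by linarith))
  set K := B ^ 2 / c₃ + B + 2 * d * A
  have hK : 0 ≤ K := by positivity
  refine ⟨d, hd, min 1 (d * b₃ / (2 * (K + 1))), by positivity, min_le_left _ _,
    min (c₃ / 2) (d * b₃ / 2), by positivity, ?_⟩
  intro δ hδ hδ₀ e ψ v v' u u' he hψ hΔV hΔU
  have hδ₁ : δ ≤ 1 := hδ₀.trans (min_le_left _ _)
  have hδK : δ * K ≤ d * b₃ / 2 := by
    have : δ * (K + 1) ≤ d * b₃ / 2 := by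
      have := hδ₀.trans (min_le_right _ _)
      rw [le_div_iff₀ (by positivity)] at this
      linarith
    nlinarith
  have young : B * ψ * e ≤ c₃ / 4 * e ^ 2 + B ^ 2 / c₃ * ψ ^ 2 :=
    (mul_le_div_four_mul_sq_add_sq_div hc₃ (B * ψ) e).trans_eq (by ring)
  set μ := min (c₃ / 2) (d * b₃ / 2)
  have hsplit : v' + d * u' - (v + d * u) ≤ -(δ * (c₃ / 2)) * e ^ 2 - d * b₃ / 2 * ψ ^ 2 := by
    have hyoung := mul_le_mul_of_nonneg_left young hδ
    have hcross : δ * d * A * (e + ψ) ^ 2 ≤ δ * (2 * d * A) * (e ^ 2 + ψ ^ 2) := by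
      have := mul_nonneg (mul_nonneg (mul_nonneg hδ hd.le) hA) (sq_nonneg (e - ψ))
      linarith
    have hcoupling := mul_le_mul_of_nonneg_right (mul_le_mul_of_nonneg_left hdA hδ) (sq_nonneg e)
    have hfast := mul_le_mul_of_nonneg_right hδK (sq_nonneg ψ)
    have hdΔU := mul_le_mul_of_nonneg_left hΔU hd.le
    simp only [K] at hfast
    linarith
  have hμe : δ * μ * e ^ 2 ≤ δ * (c₃ / 2) * e ^ 2 := by gcongr; exact min_le_left _ _
  have hμψ : δ * μ * ψ ^ 2 ≤ d * b₃ / 2 * ψ ^ 2 := by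
    gcongr
    calc δ * μ ≤ 1 * μ := by gcongr
      _ ≤ d * b₃ / 2 := by rw [one_mul]; exact min_le_right _ _
  linarith

section Interconnection

variable {X Y : Type*} [NormedAddCommGroup X] [NormedAddCommGroup Y]

lemma lyapunov_add_sub_le {U : Y → ℝ} {b₁ b₂ b₃ b₄ : ℝ} (hb₁ : 0 < b₁) (hb₃ : 0 ≤ b₃)
    (hb₄ : 0 ≤ b₄) (hU₁ : ∀ ψ, b₁ * ‖ψ‖ ^ 2 ≤ U ψ ∧ U ψ ≤ b₂ * ‖ψ‖ ^ 2)
    (hU₃ : ∀ ψ₁ ψ₂, |U ψ₁ - U ψ₂| ≤ b₄ * ‖ψ₁ - ψ₂‖ * (‖ψ₁‖ + ‖ψ₂‖)) {p q r : Y}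
    (hpq : U p - U q ≤ -b₃ * ‖q‖ ^ 2) :
    U (p + r) - U q ≤ -b₃ * ‖q‖ ^ 2 + b₄ * ‖r‖ * (‖r‖ + 2 * √(b₂ / b₁) * ‖q‖) := by
  have hp : ‖p‖ ≤ √(b₂ / b₁) * ‖q‖ := norm_le_sqrt_div_mul_norm hb₁ (by
    nlinarith [(hU₁ p).1, (hU₁ q).2, mul_nonneg hb₃ (sq_nonneg ‖q‖)])
  have hpr : U (p + r) - U p ≤ b₄ * ‖r‖ * (‖r‖ + 2 * √(b₂ / b₁) * ‖q‖) :=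
    calc U (p + r) - U p ≤ b₄ * ‖p + r - p‖ * (‖p + r‖ + ‖p‖) := (le_abs_self _).trans (hU₃ _ _)
      _ ≤ b₄ * ‖r‖ * (‖r‖ + 2 * √(b₂ / b₁) * ‖q‖) := by
        rw [add_sub_cancel_left]
        have hsum : ‖p + r‖ + ‖p‖ ≤ ‖r‖ + 2 * √(b₂ / b₁) * ‖q‖ := by linarith [norm_add_le p r]
        exact mul_le_mul_of_nonneg_left hsum (by positivity)
  linarith

variable {D : Set X} {f : X → Y → X} {h : X → Y} {χstar : X} {Lf Lh : ℝ}

lemma norm_apply_le_of_equilibrium (hLf : 0 ≤ Lf) (hLh : 0 ≤ Lh)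
    (hfLip : ∀ χ ∈ D, ∀ χ' ∈ D, ∀ w w', ‖f χ w - f χ' w'‖ ≤ Lf * (‖χ - χ'‖ + ‖w - w'‖))
    (hhLip : ∀ χ ∈ D, ∀ χ' ∈ D, ‖h χ - h χ'‖ ≤ Lh * ‖χ - χ'‖)
    (hχstar : χstar ∈ D) (hfeq : f χstar (h χstar) = 0) {x : X} (hx : x ∈ D) (y : Y) :
    ‖f x y‖ ≤ Lf * (1 + Lh) * (‖x - χstar‖ + ‖y - h x‖) := by
  have hy : ‖y - h χstar‖ ≤ ‖y - h x‖ + Lh * ‖x - χstar‖ :=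
    (norm_sub_le_norm_sub_add_norm_sub _ _ _).trans (by gcongr; exact hhLip x hx χstar hχstar)
  calc ‖f x y‖ = ‖f x y - f χstar (h χstar)‖ := by rw [hfeq, sub_zero]
    _ ≤ Lf * (‖x - χstar‖ + ‖y - h χstar‖) := hfLip x hx χstar hχstar y (h χstar)
    _ ≤ Lf * (‖x - χstar‖ + (‖y - h x‖ + Lh * ‖x - χstar‖)) := by gcongr
    _ ≤ Lf * (1 + Lh) * (‖x - χstar‖ + ‖y - h x‖) := by
      nlinarith [mul_nonneg (mul_nonneg hLf hLh) (norm_nonneg (y - h x))]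

variable [NormedSpace ℝ X]

lemma norm_add_smul_sub_le (x v c : X) {δ : ℝ} (hδ : 0 ≤ δ) :
    ‖x + δ • v - c‖ ≤ ‖x - c‖ + δ * ‖v‖ := by
  rw [add_sub_right_comm]
  exact (norm_add_le _ _).trans_eq (by rw [norm_smul, Real.norm_of_nonneg hδ])

lemma exists_slow_step {V : X → ℝ} {c₄ : ℝ} (hLf : 0 ≤ Lf) (hLh : 0 ≤ Lh) (hc₄ : 0 ≤ c₄)
    (hfLip : ∀ χ ∈ D, ∀ χ' ∈ D, ∀ w w', ‖f χ w - f χ' w'‖ ≤ Lf * (‖χ - χ'‖ + ‖w - w'‖))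
    (hhLip : ∀ χ ∈ D, ∀ χ' ∈ D, ‖h χ - h χ'‖ ≤ Lh * ‖χ - χ'‖)
    (hχstar : χstar ∈ D) (hfeq : f χstar (h χstar) = 0)
    (hV₃ : ∀ χ₁ ∈ D, ∀ χ₂ ∈ D,
      |V χ₁ - V χ₂| ≤ c₄ * ‖χ₁ - χ₂‖ * (‖χ₁ - χstar‖ + ‖χ₂ - χstar‖)) :
    ∃ B ≥ 0, ∀ δ, 0 ≤ δ → δ ≤ 1 → ∀ x ∈ D, ∀ y, x + δ • f x y ∈ D → x + δ • f x (h x) ∈ D →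
      V (x + δ • f x y) - V (x + δ • f x (h x)) ≤
        δ * B * ‖y - h x‖ * (‖x - χstar‖ + ‖y - h x‖) := by
  set F := Lf * (1 + Lh)
  have hF : 0 ≤ F := by positivity
  refine ⟨2 * c₄ * Lf * (1 + F), by positivity, fun δ hδ hδ₁ x hx y hx₁ hx₂ => ?_⟩
  set e := ‖x - χstar‖
  set ψ := ‖y - h x‖
  have hfy := norm_apply_le_of_equilibrium hLf hLh hfLip hhLip hχstar hfeq hx y
  have hfh := norm_apply_le_of_equilibrium hLf hLh hfLip hhLip hχstar hfeq hx (h x)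
  rw [sub_self, norm_zero, add_zero] at hfh
  have hgap : ‖x + δ • f x y - (x + δ • f x (h x))‖ ≤ δ * (Lf * ψ) := by
    rw [add_sub_add_left_eq_sub, ← smul_sub, norm_smul, Real.norm_of_nonneg hδ]
    gcongr
    simpa using hfLip x hx x hx y (h x)
  have hsum : ‖x + δ • f x y - χstar‖ + ‖x + δ • f x (h x) - χstar‖ ≤ 2 * (1 + F) * (e + ψ) := by
    have h₁ := norm_add_smul_sub_le x (f x y) χstar hδ
    have h₂ := norm_add_smul_sub_le x (f x (h x)) χstar hδ
    have h₃ : δ * ‖f x y‖ ≤ F * (e + ψ) := by nlinarith [norm_nonneg (f x y)]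
    have h₄ : δ * ‖f x (h x)‖ ≤ F * e := by nlinarith [norm_nonneg (f x (h x))]
    have := norm_nonneg (y - h x)
    nlinarith
  calc V (x + δ • f x y) - V (x + δ • f x (h x))
      ≤ c₄ * ‖x + δ • f x y - (x + δ • f x (h x))‖ *
          (‖x + δ • f x y - χstar‖ + ‖x + δ • f x (h x) - χstar‖) :=
        (le_abs_self _).trans (hV₃ _ hx₁ _ hx₂)
    _ ≤ c₄ * (δ * (Lf * ψ)) * (2 * (1 + F) * (e + ψ)) := by gcongr
    _ = δ * (2 * c₄ * Lf * (1 + F)) * ψ * (e + ψ) := by ring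

lemma exists_fast_error_step {g : Y → X → Y} {U : Y → ℝ} {b₁ b₂ b₃ b₄ : ℝ} (hLf : 0 ≤ Lf)
    (hLh : 0 ≤ Lh) (hb₁ : 0 < b₁) (hb₃ : 0 ≤ b₃) (hb₄ : 0 ≤ b₄)
    (hfLip : ∀ χ ∈ D, ∀ χ' ∈ D, ∀ w w', ‖f χ w - f χ' w'‖ ≤ Lf * (‖χ - χ'‖ + ‖w - w'‖))
    (hhLip : ∀ χ ∈ D, ∀ χ' ∈ D, ‖h χ - h χ'‖ ≤ Lh * ‖χ - χ'‖)
    (hχstar : χstar ∈ D) (hfeq : f χstar (h χstar) = 0)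
    (hU₁ : ∀ ψ, b₁ * ‖ψ‖ ^ 2 ≤ U ψ ∧ U ψ ≤ b₂ * ‖ψ‖ ^ 2)
    (hU₂ : ∀ χ ∈ D, ∀ ψ, U (g (ψ + h χ) χ - h χ) - U ψ ≤ -b₃ * ‖ψ‖ ^ 2)
    (hU₃ : ∀ ψ₁ ψ₂, |U ψ₁ - U ψ₂| ≤ b₄ * ‖ψ₁ - ψ₂‖ * (‖ψ₁‖ + ‖ψ₂‖)) :
    ∃ A ≥ 0, ∀ δ, 0 ≤ δ → δ ≤ 1 → ∀ x ∈ D, ∀ y, x + δ • f x y ∈ D →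
      U (g y x - h (x + δ • f x y)) - U (y - h x) ≤
        -b₃ * ‖y - h x‖ ^ 2 + δ * A * (‖x - χstar‖ + ‖y - h x‖) ^ 2 := by
  set E := Lh * (Lf * (1 + Lh))
  set κ := √(b₂ / b₁)
  have hE : 0 ≤ E := by positivity
  refine ⟨b₄ * E * (E + 2 * κ), by positivity, fun δ hδ hδ₁ x hx y hx₁ => ?_⟩
  set s := ‖x - χstar‖ + ‖y - h x‖
  have hψs : ‖y - h x‖ ≤ s := le_add_of_nonneg_left (norm_nonneg _)
  have hdrift : ‖h x - h (x + δ • f x y)‖ ≤ δ * E * s :=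
    calc ‖h x - h (x + δ • f x y)‖ ≤ Lh * (δ * ‖f x y‖) := by
          refine (hhLip x hx _ hx₁).trans_eq ?_
          rw [sub_add_cancel_left, norm_neg, norm_smul, Real.norm_of_nonneg hδ]
      _ ≤ Lh * (δ * (Lf * (1 + Lh) * s)) := by
          gcongr; exact norm_apply_le_of_equilibrium hLf hLh hfLip hhLip hχstar hfeq hx y
      _ = δ * E * s := by ring
  have hstep := lyapunov_add_sub_le (r := h x - h (x + δ • f x y)) hb₁ hb₃ hb₄ hU₁ hU₃
    (by simpa using hU₂ x hx (y - h x))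
  rw [sub_add_sub_cancel] at hstep
  refine hstep.trans (add_le_add le_rfl ?_)
  calc b₄ * ‖h x - h (x + δ • f x y)‖ * (‖h x - h (x + δ • f x y)‖ + 2 * κ * ‖y - h x‖)
      ≤ b₄ * (δ * E * s) * (δ * E * s + 2 * κ * s) := by gcongr
    _ = δ * b₄ * E * s ^ 2 * (δ * E + 2 * κ) := by ring
    _ ≤ δ * b₄ * E * s ^ 2 * (1 * E + 2 * κ) := by gcongr
    _ = δ * (b₄ * E * (E + 2 * κ)) * s ^ 2 := by ring

end Interconnection

theorem singular_perturbation_exponential_stability_general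
    (nn mm : ℕ)
    (D : Set (EuclideanSpace ℝ (Fin nn)))
    (f : EuclideanSpace ℝ (Fin nn) → EuclideanSpace ℝ (Fin mm) → EuclideanSpace ℝ (Fin nn))
    (g : EuclideanSpace ℝ (Fin mm) → EuclideanSpace ℝ (Fin nn) → EuclideanSpace ℝ (Fin mm))
    (h : EuclideanSpace ℝ (Fin nn) → EuclideanSpace ℝ (Fin mm))
    (δbar2 : ℝ) (hδbar2 : 0 < δbar2)
    -- `D` is forward invariant for the `χ`-update
    (hinv : ∀ δ : ℝ, 0 < δ → δ < δbar2 → ∀ χ ∈ D, ∀ w, χ + δ • f χ w ∈ D)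
    -- (i) `f` and `g` are Lipschitz continuous in both arguments
    (Lf : ℝ) (hLf : 0 < Lf)
    (hfLip : ∀ χ ∈ D, ∀ χ' ∈ D, ∀ w w',
      ‖f χ w - f χ' w'‖ ≤ Lf * Real.sqrt (‖χ - χ'‖ ^ 2 + ‖w - w'‖ ^ 2))
    -- (ii) `h` is a Lipschitz equilibrium map of the fast dynamics
    (Lh : ℝ) (hLh : 0 < Lh)
    (hhLip : ∀ χ ∈ D, ∀ χ' ∈ D, ‖h χ - h χ'‖ ≤ Lh * ‖χ - χ'‖)
    -- (iii) Lyapunov function for the boundary layer system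
    (U : EuclideanSpace ℝ (Fin mm) → ℝ)
    (b1 b2 b3 b4 : ℝ) (hb1 : 0 < b1) (hb3 : 0 < b3) (hb4 : 0 < b4)
    (hU1 : ∀ ψ, b1 * ‖ψ‖ ^ 2 ≤ U ψ ∧ U ψ ≤ b2 * ‖ψ‖ ^ 2)
    (hU2 : ∀ χ ∈ D, ∀ ψ, U (g (ψ + h χ) χ - h χ) - U ψ ≤ -b3 * ‖ψ‖ ^ 2)
    (hU3 : ∀ ψ1 ψ2, |U ψ1 - U ψ2| ≤ b4 * ‖ψ1 - ψ2‖ * (‖ψ1‖ + ‖ψ2‖))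
    -- (iv) Lyapunov function for the reduced system
    (χstar : EuclideanSpace ℝ (Fin nn)) (hχstar : χstar ∈ D)
    (hfeq : f χstar (h χstar) = 0)
    (V : EuclideanSpace ℝ (Fin nn) → ℝ)
    (c1 c2 c3 c4 : ℝ) (hc1 : 0 < c1) (hc2 : 0 < c2) (hc3 : 0 < c3) (hc4 : 0 < c4)
    (hV1 : ∀ χ ∈ D, c1 * ‖χ - χstar‖ ^ 2 ≤ V χ ∧ V χ ≤ c2 * ‖χ - χstar‖ ^ 2)
    (hV2 : ∀ δ : ℝ, 0 < δ → δ < δbar2 → ∀ χ ∈ D,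
      V (χ + δ • f χ (h χ)) - V χ ≤ -(δ * c3) * ‖χ - χstar‖ ^ 2)
    (hV3 : ∀ χ1 ∈ D, ∀ χ2 ∈ D,
      |V χ1 - V χ2| ≤ c4 * ‖χ1 - χ2‖ * (‖χ1 - χstar‖ + ‖χ2 - χstar‖)) :
    ∃ δbar : ℝ, 0 < δbar ∧ δbar < δbar2 ∧
      ∀ δ : ℝ, 0 < δ → δ < δbar →
        ∃ a lam : ℝ, 0 < a ∧ 0 < lam ∧
          ∀ (χ : ℕ → EuclideanSpace ℝ (Fin nn)) (w : ℕ → EuclideanSpace ℝ (Fin mm)),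
            χ 0 ∈ D →
            (∀ t, χ (t + 1) = χ t + δ • f (χ t) (w t)) →
            (∀ t, w (t + 1) = g (w t) (χ t)) →
            ∀ t : ℕ,
              ‖χ t - χstar‖ ^ 2 + ‖w t - h (χ t)‖ ^ 2 ≤
                a * Real.exp (-lam * t) *
                  (‖χ 0 - χstar‖ ^ 2 + ‖w 0 - h (χ 0)‖ ^ 2) := by
  have hfLip' : ∀ χ ∈ D, ∀ χ' ∈ D, ∀ w w', ‖f χ w - f χ' w'‖ ≤ Lf * (‖χ - χ'‖ + ‖w - w'‖) :=
    fun χ hχ χ' hχ' w w' => (hfLip χ hχ χ' hχ' w w').trans <|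
      mul_le_mul_of_nonneg_left (sqrt_sq_add_sq_le_add (norm_nonneg _) (norm_nonneg _)) hLf.le
  obtain ⟨A, hA, hfast⟩ := exists_fast_error_step hLf.le hLh.le hb1 hb3.le hb4.le hfLip' hhLip
    hχstar hfeq hU1 hU2 hU3
  obtain ⟨B, hB, hslow⟩ :=
    exists_slow_step hLf.le hLh.le hc4.le hfLip' hhLip hχstar hfeq hV3
  obtain ⟨d, hd, δ₀, hδ₀, hδ₀₁, μ, hμ, hdecrease⟩ := exists_weighted_sum_decrease hc3 hb3 hA hB
  refine ⟨min δ₀ (δbar2 / 2), by positivity, by linarith [min_le_right δ₀ (δbar2 / 2)],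
    fun δ hδ hδbar => ?_⟩
  have hδδ₀ : δ ≤ δ₀ := (hδbar.trans_le (min_le_left _ _)).le
  have hδ₂ : δ < δbar2 := by linarith [min_le_right δ₀ (δbar2 / 2)]
  have hM : 0 < max c2 (d * b2) := lt_max_of_lt_left hc2
  have hm : 0 < min c1 (d * b1) := lt_min hc1 (by positivity)
  refine ⟨_, δ * μ / max c2 (d * b2), div_pos hM hm, by positivity, fun χ w hχ₀ hχ hw t => ?_⟩
  have hD : ∀ t, χ t ∈ D := Nat.rec hχ₀ fun t ht => hχ t ▸ hinv δ hδ hδ₂ _ ht _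
  refine le_mul_exp_of_lyapunov (W := fun t => V (χ t) + d * U (w t - h (χ t))) hm hM
    (by positivity) (fun t => by positivity)
    (fun t => min_mul_add_le_add_mul (hV1 _ (hD t)).1 (hU1 _).1 (sq_nonneg _) (sq_nonneg _) hd.le)
    (fun t => add_mul_le_max_mul_add (hV1 _ (hD t)).2 (hU1 _).2 (sq_nonneg _) (sq_nonneg _) hd.le)
    (fun t => ?_) t
  have hx₁ := hinv δ hδ hδ₂ _ (hD t) (w t)
  have hx₂ := hinv δ hδ hδ₂ _ (hD t) (h (χ t))
  have hΔV := hslow δ hδ.le (hδδ₀.trans hδ₀₁) _ (hD t) (w t) hx₁ hx₂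
  simp only [hχ t, hw t]
  exact hdecrease δ hδ.le hδδ₀ _ _ _ _ _ _ (norm_nonneg _) (norm_nonneg _)
    (by linarith [hV2 δ hδ hδ₂ _ (hD t)]) (hfast δ hδ.le (hδδ₀.trans hδ₀₁) _ (hD t) (w t) hx₁)

/-- discrete-time singular perturbation result. Under Lipschitz continuity
of the maps, existence of a Lipschitz equilibrium map `h` for the fast dynamics, a
Lyapunov function `U` for the boundary layer system and a Lyapunov function `V` for the
reduced system, there exists `δ̄ ∈ (0, δ̄₂)` such that for each `δ ∈ (0, δ̄)` the
interconnection converges exponentially: `(χ⋆, h(χ⋆))` is globally exponentially stable. -/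
theorem singular_perturbation_exponential_stability
    (nn mm : ℕ)
    (D : Set (EuclideanSpace ℝ (Fin nn)))
    (hDcl : IsClosed D)
    (f : EuclideanSpace ℝ (Fin nn) → EuclideanSpace ℝ (Fin mm) → EuclideanSpace ℝ (Fin nn))
    (g : EuclideanSpace ℝ (Fin mm) → EuclideanSpace ℝ (Fin nn) → EuclideanSpace ℝ (Fin mm))
    (h : EuclideanSpace ℝ (Fin nn) → EuclideanSpace ℝ (Fin mm))
    (δbar2 : ℝ) (hδbar2 : 0 < δbar2)
    -- `D` is forward invariant for the `χ`-update
    (hinv : ∀ δ : ℝ, 0 < δ → δ < δbar2 → ∀ χ ∈ D, ∀ w, χ + δ • f χ w ∈ D)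
    -- (i) `f` and `g` are Lipschitz continuous in both arguments
    (Lf : ℝ) (hLf : 0 < Lf)
    (hfLip : ∀ χ ∈ D, ∀ χ' ∈ D, ∀ w w',
      ‖f χ w - f χ' w'‖ ≤ Lf * Real.sqrt (‖χ - χ'‖ ^ 2 + ‖w - w'‖ ^ 2))
    (Lg : ℝ) (hLg : 0 < Lg)
    (hgLip : ∀ χ ∈ D, ∀ χ' ∈ D, ∀ w w',
      ‖g w χ - g w' χ'‖ ≤ Lg * Real.sqrt (‖χ - χ'‖ ^ 2 + ‖w - w'‖ ^ 2))
    -- (ii) `h` is a Lipschitz equilibrium map of the fast dynamics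
    (Lh : ℝ) (hLh : 0 < Lh)
    (hhLip : ∀ χ ∈ D, ∀ χ' ∈ D, ‖h χ - h χ'‖ ≤ Lh * ‖χ - χ'‖)
    (heq : ∀ χ ∈ D, h χ = g (h χ) χ)
    -- (iii) Lyapunov function for the boundary layer system
    (U : EuclideanSpace ℝ (Fin mm) → ℝ) (hUcont : Continuous U)
    (b1 b2 b3 b4 : ℝ) (hb1 : 0 < b1) (hb2 : 0 < b2) (hb3 : 0 < b3) (hb4 : 0 < b4)
    (hU1 : ∀ ψ, b1 * ‖ψ‖ ^ 2 ≤ U ψ ∧ U ψ ≤ b2 * ‖ψ‖ ^ 2)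
    (hU2 : ∀ χ ∈ D, ∀ ψ, U (g (ψ + h χ) χ - h χ) - U ψ ≤ -b3 * ‖ψ‖ ^ 2)
    (hU3 : ∀ ψ1 ψ2, |U ψ1 - U ψ2| ≤ b4 * ‖ψ1 - ψ2‖ * (‖ψ1‖ + ‖ψ2‖))
    -- (iv) Lyapunov function for the reduced system
    (χstar : EuclideanSpace ℝ (Fin nn)) (hχstar : χstar ∈ D)
    (hfeq : f χstar (h χstar) = 0)
    (V : EuclideanSpace ℝ (Fin nn) → ℝ) (hVcont : Continuous V)
    (c1 c2 c3 c4 : ℝ) (hc1 : 0 < c1) (hc2 : 0 < c2) (hc3 : 0 < c3) (hc4 : 0 < c4)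
    (hV1 : ∀ χ ∈ D, c1 * ‖χ - χstar‖ ^ 2 ≤ V χ ∧ V χ ≤ c2 * ‖χ - χstar‖ ^ 2)
    (hV2 : ∀ δ : ℝ, 0 < δ → δ < δbar2 → ∀ χ ∈ D,
      V (χ + δ • f χ (h χ)) - V χ ≤ -(δ * c3) * ‖χ - χstar‖ ^ 2)
    (hV3 : ∀ χ1 ∈ D, ∀ χ2 ∈ D,
      |V χ1 - V χ2| ≤ c4 * ‖χ1 - χ2‖ * (‖χ1 - χstar‖ + ‖χ2 - χstar‖)) :
    ∃ δbar : ℝ, 0 < δbar ∧ δbar < δbar2 ∧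
      ∀ δ : ℝ, 0 < δ → δ < δbar →
        ∃ a lam : ℝ, 0 < a ∧ 0 < lam ∧
          ∀ (χ : ℕ → EuclideanSpace ℝ (Fin nn)) (w : ℕ → EuclideanSpace ℝ (Fin mm)),
            χ 0 ∈ D →
            (∀ t, χ (t + 1) = χ t + δ • f (χ t) (w t)) →
            (∀ t, w (t + 1) = g (w t) (χ t)) →
            ∀ t : ℕ,
              ‖χ t - χstar‖ ^ 2 + ‖w t - h (χ t)‖ ^ 2 ≤
                a * Real.exp (-lam * t) *
                  (‖χ 0 - χstar‖ ^ 2 + ‖w 0 - h (χ 0)‖ ^ 2) :=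
  singular_perturbation_exponential_stability_general nn mm D f g h δbar2 hδbar2 hinv Lf hLf hfLip
    Lh hLh hhLip U b1 b2 b3 b4 hb1 hb3 hb4 hU1 hU2 hU3 χstar hχstar hfeq V c1 c2 c3 c4 hc1 hc2 hc3
    hc4 hV1 hV2 hV3
end
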